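/- arXiv:math/0611341 — 2 statements merged into one kernel-verified Lean document; each statement's English description precedes it below -/
import Mathlib

section
/- Let D ⊂ ℂ^{m+n} be a Reinhardt bounded domain whose sliced Bergman kernels K_w depend smoothly on w, let φ = dw₁ ∧ ⋯ ∧ dw_m ∧ exp(√-1 Ω) with Ω = (√-1/2) ∂∂̄ log K be the induced generalized Calabi–Yau structure, and let S¹ act by rotating the z-coordinates. Then μ(w, z) = −(1/2) Σ_{j=1}^n z_j ∂/∂z_j (log K) is a generalized moment map for this action, i.e. dμ = ι_ξ Ω where ξ is the fundamental vector field of the S¹-action. -/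
set_option synthInstance.maxHeartbeats 1000000
set_option maxHeartbeats 1000000
set_option maxSynthPendingDepth 3

open Module LinearMap

noncomputable section

/-- the model space `ℂ^m × ℂ^n` (coordinates `w`, `z`) -/
abbrev P (m n : ℕ) := (Fin m → ℂ) × (Fin n → ℂ)

variable {m n : ℕ}

/-- the Wirtinger derivative `∂_v f` of `f` at `p` in the (complexified) direction `v`:
`(1/2)(∂_v − i ∂_{iv})` -/
def Wz (f : P m n → ℂ) (p v : P m n) : ℂ :=
  (1 / 2) * (fderiv ℝ f p v - Complex.I * fderiv ℝ f p (Complex.I • v))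

/-- the conjugate Wirtinger derivative `∂̄_v f`: `(1/2)(∂_v + i ∂_{iv})` -/
def Wzbar (f : P m n → ℂ) (p v : P m n) : ℂ :=
  (1 / 2) * (fderiv ℝ f p v + Complex.I * fderiv ℝ f p (Complex.I • v))

/-- the complex Hessian `∂_u ∂̄_v f` at `p` -/
def cHess (f : P m n → ℂ) (p u v : P m n) : ℂ :=
  Wz (fun q => Wzbar f q v) p u

/-- the Kähler-type 2-form `Ω = (√-1/2) ∂∂̄ f`, evaluated on tangent vectors `u`, `v` -/
def Om (f : P m n → ℂ) (p u v : P m n) : ℂ :=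
  (Complex.I / 2) * (cHess f p u v - cHess f p v u)

/-- the fundamental vector field `ξ = √-1 Σ_j (z_j ∂/∂z_j − z̄_j ∂/∂z̄_j)` of the
`S¹`-action rotating the `z`-coordinates, i.e. `p ↦ (0, i z)` -/
def xiS1 (p : P m n) : P m n := ((0 : Fin m → ℂ), fun j => Complex.I * p.2 j)

/-- the `j`-th coordinate direction in the `z`-factor -/
def ez (m : ℕ) {n : ℕ} (j : Fin n) : P m n := ((0 : Fin m → ℂ), Pi.single j 1)

/-- the `S¹`-action `e^{iθ}·(w,z) = (w, e^{iθ}z)` -/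
def rotz (θ : ℝ) (p : P m n) : P m n :=
  (p.1, fun j => Complex.exp (θ * Complex.I) * p.2 j)

/-- the full torus action of `T^{m+n}` on `ℂ^{m+n}` -/
def rotT (θ : Fin m → ℝ) (ψ : Fin n → ℝ) (p : P m n) : P m n :=
  (fun i => Complex.exp (θ i * Complex.I) * p.1 i,
   fun j => Complex.exp (ψ j * Complex.I) * p.2 j)

/-! ### auxiliary lemmas -/

lemma csmul_decomp (c : ℂ) (u : P m n) :
    c • u = c.re • u + c.im • (Complex.I • u) := by
  have h1 : c.re • u = ((c.re : ℂ)) • u := by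
    simp [Complex.coe_smul]
  have h2 : c.im • (Complex.I • u) = ((c.im : ℂ) * Complex.I) • u := by
    rw [mul_smul]; simp [Complex.coe_smul]
  rw [h1, h2, ← add_smul, Complex.re_add_im]

lemma fderiv_csmul (f : P m n → ℂ) (p : P m n) (c : ℂ) (u : P m n) :
    fderiv ℝ f p (c • u) = c.re * fderiv ℝ f p u + c.im * fderiv ℝ f p (Complex.I • u) := by
  rw [csmul_decomp, map_add, map_smul, map_smul]
  simp [Complex.real_smul]

lemma wz_smul (f : P m n → ℂ) (p : P m n) (c : ℂ) (u : P m n) :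
    Wz f p (c • u) = c * Wz f p u := by
  have h1 : Complex.I • c • u = (Complex.I * c) • u := (smul_smul _ _ _)
  have ha := fderiv_csmul f p c u
  have hb := fderiv_csmul f p (Complex.I * c) u
  rw [Wz, Wz, h1, ha, hb]
  have hre : (((Complex.I * c).re : ℝ) : ℂ) = -c.im := by simp
  have him : (((Complex.I * c).im : ℝ) : ℂ) = c.re := by simp
  rw [hre, him]
  have hc : (c : ℂ) = (c.re : ℂ) + (c.im : ℂ) * Complex.I := (Complex.re_add_im c).symm
  set a := fderiv ℝ f p u
  set b := fderiv ℝ f p (Complex.I • u)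
  conv_rhs => rw [hc]
  ring_nf
  rw [Complex.I_sq]
  ring

lemma wzbar_smul (f : P m n → ℂ) (p : P m n) (c : ℂ) (u : P m n) :
    Wzbar f p (c • u) = (starRingEnd ℂ) c * Wzbar f p u := by
  have h1 : Complex.I • c • u = (Complex.I * c) • u := (smul_smul _ _ _)
  have ha := fderiv_csmul f p c u
  have hb := fderiv_csmul f p (Complex.I * c) u
  rw [Wzbar, Wzbar, h1, ha, hb]
  have hre : (((Complex.I * c).re : ℝ) : ℂ) = -c.im := by simp
  have him : (((Complex.I * c).im : ℝ) : ℂ) = c.re := by simp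
  rw [hre, him]
  have hc : (starRingEnd ℂ) c = (c.re : ℂ) - (c.im : ℂ) * Complex.I := by
    simp [Complex.ext_iff]
  set a := fderiv ℝ f p u
  set b := fderiv ℝ f p (Complex.I • u)
  rw [hc]
  ring_nf
  rw [Complex.I_sq]
  ring

lemma fderiv_eq_wz_add (f : P m n → ℂ) (p v : P m n) :
    fderiv ℝ f p v = Wz f p v + Wzbar f p v := by
  rw [Wz, Wzbar]; ring

lemma fderiv_csmul' (f : P m n → ℂ) (p : P m n) (c : ℂ) (u : P m n) :
    fderiv ℝ f p (c • u) = c * Wz f p u + (starRingEnd ℂ) c * Wzbar f p u := by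
  rw [fderiv_eq_wz_add, wz_smul, wzbar_smul]

lemma wz_zero (f : P m n → ℂ) (p : P m n) : Wz f p 0 = 0 := by
  simp [Wz]

lemma wz_add (f : P m n → ℂ) (p u v : P m n) :
    Wz f p (u + v) = Wz f p u + Wz f p v := by
  simp only [Wz, smul_add, map_add]; ring

lemma wz_sum (f : P m n → ℂ) (p : P m n) {ι : Type*} (s : Finset ι) (g : ι → P m n) :
    Wz f p (∑ j ∈ s, g j) = ∑ j ∈ s, Wz f p (g j) := by
  classical
  induction s using Finset.induction with
  | empty => simp [wz_zero]
  | insert _ _ h ih => rw [Finset.sum_insert h, Finset.sum_insert h, wz_add, ih]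

lemma wzbar_zero (f : P m n → ℂ) (p : P m n) : Wzbar f p 0 = 0 := by
  simp [Wzbar]

lemma wzbar_add (f : P m n → ℂ) (p u v : P m n) :
    Wzbar f p (u + v) = Wzbar f p u + Wzbar f p v := by
  simp only [Wzbar, smul_add, map_add]; ring

lemma wzbar_sum (f : P m n → ℂ) (p : P m n) {ι : Type*} (s : Finset ι) (g : ι → P m n) :
    Wzbar f p (∑ j ∈ s, g j) = ∑ j ∈ s, Wzbar f p (g j) := by
  classical
  induction s using Finset.induction with
  | empty => simp [wzbar_zero]
  | insert _ _ h ih => rw [Finset.sum_insert h, Finset.sum_insert h, wzbar_add, ih]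

lemma hFdiff (f : P m n → ℂ) (p : P m n) (hf : ContDiffAt ℝ (⊤:ℕ∞) f p) :
    DifferentiableAt ℝ (fderiv ℝ f) p :=
  (hf.fderiv_right (m := (⊤:ℕ∞)) (by norm_cast)).differentiableAt (by norm_cast)

lemma hEdiff (f : P m n → ℂ) (p : P m n) (hf : ContDiffAt ℝ (⊤:ℕ∞) f p) (w : P m n) :
    DifferentiableAt ℝ (fun q => fderiv ℝ f q w) p :=
  ((ContinuousLinearMap.apply ℝ ℂ w).hasFDerivAt.comp p
    (hFdiff f p hf).hasFDerivAt).differentiableAt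

lemma fderiv_fderiv_apply (f : P m n → ℂ) (p : P m n) (hf : ContDiffAt ℝ (⊤:ℕ∞) f p)
    (v w : P m n) :
    fderiv ℝ (fun q => fderiv ℝ f q w) p v = fderiv ℝ (fderiv ℝ f) p v w := by
  have h := ((ContinuousLinearMap.apply ℝ ℂ w).hasFDerivAt.comp p
    (hFdiff f p hf).hasFDerivAt).fderiv
  have : fderiv ℝ (fun q => fderiv ℝ f q w) p =
      (ContinuousLinearMap.apply ℝ ℂ w).comp (fderiv ℝ (fderiv ℝ f) p) := h
  rw [this]; rfl

lemma wz_diff (f : P m n → ℂ) (p : P m n) (hf : ContDiffAt ℝ (⊤:ℕ∞) f p) (u : P m n) :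
    DifferentiableAt ℝ (fun q => Wz f q u) p := by
  simp only [Wz]
  exact ((hEdiff f p hf u).sub ((hEdiff f p hf (Complex.I • u)).const_mul _)).const_mul _

lemma wzbar_diff (f : P m n → ℂ) (p : P m n) (hf : ContDiffAt ℝ (⊤:ℕ∞) f p) (u : P m n) :
    DifferentiableAt ℝ (fun q => Wzbar f q u) p := by
  simp only [Wzbar]
  exact ((hEdiff f p hf u).add ((hEdiff f p hf (Complex.I • u)).const_mul _)).const_mul _

lemma fderiv_wz_eq (f : P m n → ℂ) (p : P m n) (hf : ContDiffAt ℝ (⊤:ℕ∞) f p) (u v : P m n) :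
    fderiv ℝ (fun q => Wz f q u) p v =
      (1 / 2) * (fderiv ℝ (fderiv ℝ f) p v u
        - Complex.I * fderiv ℝ (fderiv ℝ f) p v (Complex.I • u)) := by
  simp only [Wz]
  rw [fderiv_const_mul ((hEdiff f p hf u).fun_sub ((hEdiff f p hf (Complex.I • u)).const_mul _)),
    fderiv_fun_sub (hEdiff f p hf u) ((hEdiff f p hf (Complex.I • u)).const_mul _),
    fderiv_const_mul (hEdiff f p hf (Complex.I • u))]
  simp [fderiv_fderiv_apply f p hf v u, fderiv_fderiv_apply f p hf v (Complex.I • u),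
    smul_eq_mul]

lemma fderiv_wzbar_eq (f : P m n → ℂ) (p : P m n) (hf : ContDiffAt ℝ (⊤:ℕ∞) f p) (u v : P m n) :
    fderiv ℝ (fun q => Wzbar f q u) p v =
      (1 / 2) * (fderiv ℝ (fderiv ℝ f) p v u
        + Complex.I * fderiv ℝ (fderiv ℝ f) p v (Complex.I • u)) := by
  simp only [Wzbar]
  rw [fderiv_const_mul ((hEdiff f p hf u).fun_add ((hEdiff f p hf (Complex.I • u)).const_mul _)),
    fderiv_fun_add (hEdiff f p hf u) ((hEdiff f p hf (Complex.I • u)).const_mul _),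
    fderiv_const_mul (hEdiff f p hf (Complex.I • u))]
  simp [fderiv_fderiv_apply f p hf v u, fderiv_fderiv_apply f p hf v (Complex.I • u),
    smul_eq_mul]
  ring

lemma wz_wzbar_comm (f : P m n → ℂ) (p : P m n) (hf : ContDiffAt ℝ (⊤:ℕ∞) f p) (u v : P m n) :
    Wzbar (fun q => Wz f q u) p v = Wz (fun q => Wzbar f q v) p u := by
  have hsym := hf.isSymmSndFDerivAt (by rw [minSmoothness_of_isRCLikeNormedField]; exact WithTop.coe_le_coe.mpr le_top)
  rw [Wzbar, Wz]
  rw [fderiv_wz_eq f p hf u v, fderiv_wz_eq f p hf u (Complex.I • v),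
    fderiv_wzbar_eq f p hf v u, fderiv_wzbar_eq f p hf v (Complex.I • u)]
  rw [hsym v u, hsym v (Complex.I • u), hsym (Complex.I • v) u,
    hsym (Complex.I • v) (Complex.I • u)]
  ring

lemma wz_fun_sum {ι : Type*} [Fintype ι] (g : ι → P m n → ℂ) (c : ι → ℂ) (p v : P m n)
    (hg : ∀ j, DifferentiableAt ℝ (g j) p) :
    Wz (fun q => ∑ j, c j * g j q) p v = ∑ j, c j * Wz (g j) p v := by
  have hd : fderiv ℝ (fun q => ∑ j, c j * g j q) p =
      ∑ j, c j • fderiv ℝ (g j) p := by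
    rw [fderiv_fun_sum (fun j _ => (hg j).const_mul (c j))]
    exact Finset.sum_congr rfl fun j _ => fderiv_const_mul (hg j) (c j)
  rw [Wz, hd]
  simp only [ContinuousLinearMap.sum_apply, ContinuousLinearMap.smul_apply, smul_eq_mul]
  rw [Finset.mul_sum, ← Finset.sum_sub_distrib, Finset.mul_sum]
  exact Finset.sum_congr rfl fun j _ => by rw [Wz]; ring

/-- let `D ⊂ ℂ^{m+n}` be a Reinhardt bounded domain whose sliced Bergman
kernels `K_w` depend smoothly on `w`, giving the smooth positive torus-invariant function
`K(w,z) = K_w(z)`, and let `Ω = (√-1/2)∂∂̄ log K`.  Then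
`μ(w,z) = −(1/2) Σ_j z_j ∂/∂z_j (log K)` is a generalized moment map for the `S¹`-action
rotating the `z`-coordinates: `μ` is real-valued, `S¹`-invariant, and `dμ = ι_ξ Ω`. -/
theorem bergman_generalized_moment_map
    (m n : ℕ) (D : Set (P m n)) (hD : IsOpen D) (hDb : Bornology.IsBounded D)
    (hDrot : ∀ θ ψ, ∀ p ∈ D, rotT θ ψ p ∈ D)
    (K : P m n → ℝ) (hKpos : ∀ p ∈ D, 0 < K p)
    (hKsm : ContDiffOn ℝ (⊤ : ℕ∞) K D)
    (hKinv : ∀ θ ψ, ∀ p ∈ D, K (rotT θ ψ p) = K p) :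
    (∀ p ∈ D,
        ((-(1 / 2) * ∑ j, p.2 j *
            Wz (fun q => (Real.log (K q) : ℂ)) p (ez m j)).im) = 0) ∧
    (∀ θ : ℝ, ∀ p ∈ D,
        -(1 / 2) * ∑ j, (rotz θ p).2 j *
            Wz (fun q => (Real.log (K q) : ℂ)) (rotz θ p) (ez m j) =
          -(1 / 2) * ∑ j, p.2 j * Wz (fun q => (Real.log (K q) : ℂ)) p (ez m j)) ∧
    (∀ p ∈ D, ∀ v : P m n,
        fderiv ℝ
            (fun q => -(1 / 2) * ∑ j, q.2 j *
              Wz (fun r => (Real.log (K r) : ℂ)) q (ez m j)) p v =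
          Om (fun q => (Real.log (K q) : ℂ)) p (xiS1 p) v) := by
  classical
  set f : P m n → ℂ := fun q => (Real.log (K q) : ℂ) with hfdef
  have hf : ∀ p ∈ D, ContDiffAt ℝ (⊤:ℕ∞) f p := by
    intro p hp
    exact Complex.ofRealCLM.contDiff.contDiffAt.comp p
      (((hKsm.contDiffAt (hD.mem_nhds hp)).of_le (by simp)).log (ne_of_gt (hKpos p hp)))
  have hdf : ∀ p ∈ D, DifferentiableAt ℝ f p := fun p hp =>
    (hf p hp).differentiableAt (by norm_cast)
  have hreal : ∀ p ∈ D, ∀ v, (starRingEnd ℂ) (fderiv ℝ f p v) = fderiv ℝ f p v := by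
    intro p hp v
    have hg : DifferentiableAt ℝ (fun q => Real.log (K q)) p :=
      ((((hKsm.contDiffAt (hD.mem_nhds hp)).of_le (by simp)).log
        (ne_of_gt (hKpos p hp))).differentiableAt (by norm_num : (1:WithTop ℕ∞) ≠ 0))
    have h : fderiv ℝ f p = Complex.ofRealCLM.comp (fderiv ℝ (fun q => Real.log (K q)) p) :=
      (Complex.ofRealCLM.hasFDerivAt.comp p hg.hasFDerivAt).fderiv
    rw [h]
    simp [Complex.conj_ofReal]
  have hconj : ∀ p ∈ D, ∀ v, (starRingEnd ℂ) (Wz f p v) = Wzbar f p v := by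
    intro p hp v
    rw [Wz, Wzbar, map_mul, map_sub, map_mul, hreal p hp v, hreal p hp (Complex.I • v),
      Complex.conj_I]
    have h12 : (starRingEnd ℂ) (1 / 2 : ℂ) = 1 / 2 := Complex.conj_eq_iff_im.mpr (by norm_num)
    rw [h12]; ring
  -- key invariance identity
  have hkey : ∀ p ∈ D, ∀ j, p.2 j * Wz f p (ez m j) =
      (starRingEnd ℂ) (p.2 j) * Wzbar f p (ez m j) := by
    intro p hp j
    set c : ℝ → P m n := fun t => rotT (fun _ => 0) (Pi.single j t) p with hcdef
    have hc0 : c 0 = p := by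
      simp only [hcdef, rotT, Pi.single_zero]
      apply Prod.ext <;> funext k <;> simp
    have hconst : ∀ t, f (c t) = f p := fun t => by
      simp only [hfdef, hcdef]; rw [hKinv _ _ p hp]
    have h1 : HasDerivAt
        (fun _ : ℝ => (fun i => Complex.exp (((fun _ => (0:ℝ)) i : ℝ) * Complex.I) * p.1 i :
          Fin m → ℂ)) 0 0 := hasDerivAt_const _ _
    have h2 : HasDerivAt
        (fun t : ℝ => (fun k => Complex.exp (((Pi.single j t : Fin n → ℝ) k : ℝ) * Complex.I) * p.2 k :
          Fin n → ℂ)) (Pi.single j (Complex.I * p.2 j)) 0 := by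
      rw [hasDerivAt_pi]
      intro k
      by_cases hk : k = j
      · subst hk
        simp only [Pi.single_eq_same]
        have hb : HasDerivAt (fun t : ℝ => ((t:ℂ) * Complex.I)) Complex.I 0 := by
          simpa using (Complex.ofRealCLM.hasDerivAt (x := (0:ℝ))).mul_const Complex.I
        have h3 := (hb.cexp).mul_const (p.2 k)
        simpa using h3
      · simp only [Pi.single_eq_of_ne hk, Complex.ofReal_zero, zero_mul, Complex.exp_zero,
          one_mul]
        exact hasDerivAt_const _ _
    have hder : HasDerivAt c ((Complex.I * p.2 j) • ez m j) 0 := by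
      have hv : ((0 : Fin m → ℂ), Pi.single j (Complex.I * p.2 j)) =
          (Complex.I * p.2 j) • ez m j := by
        apply Prod.ext
        · simp [ez]
        · simp [ez, ← Pi.single_smul]
      exact hv ▸ (h1.prodMk h2)
    have hF : HasFDerivAt f (fderiv ℝ f p) (c 0) := by
      rw [hc0]; exact (hdf p hp).hasFDerivAt
    have hcomp : HasDerivAt (f ∘ c) (fderiv ℝ f p ((Complex.I * p.2 j) • ez m j)) 0 :=
      hF.comp_hasDerivAt 0 hder
    have hcomp' : HasDerivAt (f ∘ c) 0 0 := by
      have he : (f ∘ c) = fun _ => f p := funext fun t => hconst t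
      rw [he]; exact hasDerivAt_const _ _
    have hzero : fderiv ℝ f p ((Complex.I * p.2 j) • ez m j) = 0 := hcomp.unique hcomp'
    rw [fderiv_csmul'] at hzero
    have e : (starRingEnd ℂ) (Complex.I * p.2 j) =
        -Complex.I * (starRingEnd ℂ) (p.2 j) := by
      rw [map_mul, Complex.conj_I]
    rw [e] at hzero
    apply mul_left_cancel₀ Complex.I_ne_zero
    linear_combination hzero
  -- part 1
  refine ⟨?_, ?_, ?_⟩
  · intro p hp
    have him : ∀ j, (p.2 j * Wz f p (ez m j)).im = 0 := by
      intro j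
      have h1 := hkey p hp j
      rw [← hconj p hp (ez m j), ← map_mul] at h1
      have := Complex.conj_eq_iff_im.mp h1.symm
      exact this
    rw [Complex.mul_im]
    simp [Complex.im_sum, him]
  -- part 2
  · intro θ p hp
    have hre : ∀ q : P m n, rotz θ q = rotT (fun _ => 0) (fun _ => θ) q := by
      intro q
      apply Prod.ext
      · funext i; simp [rotz, rotT]
      · rfl
    have hmem : rotz θ p ∈ D := by rw [hre]; exact hDrot _ _ p hp
    set e : ℂ := Complex.exp (θ * Complex.I) with hedef
    set Rc : P m n →L[ℝ] P m n :=
      (ContinuousLinearMap.id ℝ (Fin m → ℂ)).prodMap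
        (ContinuousLinearMap.restrictScalars ℝ
          (e • ContinuousLinearMap.id ℂ (Fin n → ℂ))) with hRcdef
    have hRc : ⇑Rc = rotz θ := by
      funext q
      apply Prod.ext
      · rfl
      · funext k
        show (e • q.2) k = e * q.2 k
        rfl
    have hev : (fun q => f (Rc q)) =ᶠ[nhds p] f := by
      filter_upwards [hD.mem_nhds hp] with q hq
      show f (Rc q) = f q
      rw [hRc, hre]
      simp only [hfdef]
      rw [hKinv _ _ q hq]
    have hchain : fderiv ℝ (fun q => f (Rc q)) p = (fderiv ℝ f (Rc p)).comp Rc :=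
      ((hdf (Rc p) (by rw [hRc]; exact hmem)).hasFDerivAt.comp p Rc.hasFDerivAt).fderiv
    have hfd2 : ∀ u, fderiv ℝ f (Rc p) (Rc u) = fderiv ℝ f p u := by
      intro u
      have h4 : fderiv ℝ (fun q => f (Rc q)) p = fderiv ℝ f p := hev.fderiv_eq
      rw [hchain] at h4
      rw [← h4]
      rfl
    have hRsmul : ∀ (c : ℂ) (u : P m n), Rc (c • u) = c • Rc u := by
      intro c u
      apply Prod.ext
      · rfl
      · funext k
        show e * (c * u.2 k) = c * (e * u.2 k)
        ring
    have hWzR : ∀ u, Wz f (Rc p) (Rc u) = Wz f p u := by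
      intro u
      rw [Wz, Wz, ← hRsmul Complex.I u, hfd2 u, hfd2 (Complex.I • u)]
    have hRez : ∀ j : Fin n, Rc (ez m j) = e • ez m j := by
      intro j
      apply Prod.ext
      · show (0 : Fin m → ℂ) = e • (0 : Fin m → ℂ)
        simp
      · rfl
    have hA : ∀ j, (rotz θ p).2 j * Wz f (rotz θ p) (ez m j) =
        p.2 j * Wz f p (ez m j) := by
      intro j
      have h1 : Wz f p (ez m j) = e * Wz f (rotz θ p) (ez m j) := by
        rw [← hWzR (ez m j), hRez j, wz_smul, hRc]
      have h2 : (rotz θ p).2 j = e * p.2 j := rfl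
      rw [h1, h2]
      ring
    rw [Finset.sum_congr rfl fun j _ => hA j]
  -- part 3
  · intro p hp v
    have hfp := hf p hp
    have hAd : ∀ j : Fin n, DifferentiableAt ℝ (fun q => Wz f q (ez m j)) p :=
      fun j => wz_diff f p hfp _
    have hBd : ∀ j : Fin n, DifferentiableAt ℝ (fun q => Wzbar f q (ez m j)) p :=
      fun j => wzbar_diff f p hfp _
    have hCd : ∀ j : Fin n, DifferentiableAt ℝ (fun q : P m n => q.2 j) p := fun j =>
      ((ContinuousLinearMap.proj j).comp
        (ContinuousLinearMap.snd ℝ (Fin m → ℂ) (Fin n → ℂ))).differentiableAt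
    have hCf : ∀ (j : Fin n) (u : P m n), fderiv ℝ (fun q : P m n => q.2 j) p u = u.2 j :=
      fun j u => by
        have h : fderiv ℝ (fun q : P m n => q.2 j) p =
            ((ContinuousLinearMap.proj j).comp
              (ContinuousLinearMap.snd ℝ (Fin m → ℂ) (Fin n → ℂ))) :=
          ContinuousLinearMap.fderiv ((ContinuousLinearMap.proj j).comp
            (ContinuousLinearMap.snd ℝ (Fin m → ℂ) (Fin n → ℂ)))
        rw [h]
        rfl
    have hDd : ∀ j : Fin n, DifferentiableAt ℝ
        (fun q : P m n => (starRingEnd ℂ) (q.2 j)) p := fun j =>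
      (Complex.conjCLE.toContinuousLinearMap.comp ((ContinuousLinearMap.proj j).comp
        (ContinuousLinearMap.snd ℝ (Fin m → ℂ) (Fin n → ℂ)))).differentiableAt
    have hDf : ∀ (j : Fin n) (u : P m n),
        fderiv ℝ (fun q : P m n => (starRingEnd ℂ) (q.2 j)) p u = (starRingEnd ℂ) (u.2 j) :=
      fun j u => by
        have h : fderiv ℝ (fun q : P m n => (starRingEnd ℂ) (q.2 j)) p =
            (Complex.conjCLE.toContinuousLinearMap.comp ((ContinuousLinearMap.proj j).comp
              (ContinuousLinearMap.snd ℝ (Fin m → ℂ) (Fin n → ℂ)))) :=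
          ContinuousLinearMap.fderiv (Complex.conjCLE.toContinuousLinearMap.comp
            ((ContinuousLinearMap.proj j).comp
              (ContinuousLinearMap.snd ℝ (Fin m → ℂ) (Fin n → ℂ))))
        rw [h]
        rfl
    set Sg : P m n → ℂ := fun q => ∑ j, q.2 j * Wz f q (ez m j) with hSgdef
    set Sh : P m n → ℂ := fun q => ∑ j, (starRingEnd ℂ) (q.2 j) * Wzbar f q (ez m j)
      with hShdef
    have hSgd : DifferentiableAt ℝ Sg p := by
      rw [hSgdef]
      exact DifferentiableAt.fun_sum fun j _ => (hCd j).fun_mul (hAd j)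
    have hDSg : ∀ u, fderiv ℝ Sg p u =
        ∑ j, (u.2 j * Wz f p (ez m j)
          + p.2 j * fderiv ℝ (fun q => Wz f q (ez m j)) p u) := by
      intro u
      rw [hSgdef, fderiv_fun_sum (fun j _ => (hCd j).fun_mul (hAd j)),
        ContinuousLinearMap.sum_apply]
      refine Finset.sum_congr rfl fun j _ => ?_
      rw [fderiv_fun_mul (hCd j) (hAd j)]
      simp only [ContinuousLinearMap.add_apply, ContinuousLinearMap.smul_apply, smul_eq_mul]
      rw [hCf j u]
      ring
    have hDSh : ∀ u, fderiv ℝ Sh p u =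
        ∑ j, ((starRingEnd ℂ) (u.2 j) * Wzbar f p (ez m j)
          + (starRingEnd ℂ) (p.2 j) * fderiv ℝ (fun q => Wzbar f q (ez m j)) p u) := by
      intro u
      rw [hShdef, fderiv_fun_sum (fun j _ => (hDd j).fun_mul (hBd j)),
        ContinuousLinearMap.sum_apply]
      refine Finset.sum_congr rfl fun j _ => ?_
      rw [fderiv_fun_mul (hDd j) (hBd j)]
      simp only [ContinuousLinearMap.add_apply, ContinuousLinearMap.smul_apply, smul_eq_mul]
      rw [hDf j u]
      ring
    have hev2 : Sg =ᶠ[nhds p] Sh := by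
      filter_upwards [hD.mem_nhds hp] with q hq
      rw [hSgdef, hShdef]
      exact Finset.sum_congr rfl fun j _ => hkey q hq j
    have hfdSgSh : fderiv ℝ Sg p = fderiv ℝ Sh p := hev2.fderiv_eq
    have hIv : ∀ (u : P m n) (j : Fin n), (Complex.I • u).2 j = Complex.I * u.2 j :=
      fun u j => rfl
    have hWzbarSg : Wzbar Sg p v =
        ∑ j, p.2 j * Wzbar (fun q => Wz f q (ez m j)) p v := by
      rw [Wzbar, hDSg v, hDSg (Complex.I • v)]
      rw [Finset.mul_sum, ← Finset.sum_add_distrib, Finset.mul_sum]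
      refine Finset.sum_congr rfl fun j _ => ?_
      rw [hIv v j, Wzbar]
      ring_nf
      rw [Complex.I_sq]
      ring
    have hWzSh : Wz Sh p v =
        ∑ j, (starRingEnd ℂ) (p.2 j) * Wz (fun q => Wzbar f q (ez m j)) p v := by
      rw [Wz, hDSh v, hDSh (Complex.I • v)]
      rw [Finset.mul_sum, ← Finset.sum_sub_distrib, Finset.mul_sum]
      refine Finset.sum_congr rfl fun j _ => ?_
      rw [hIv v j, map_mul, Complex.conj_I, Wz]
      ring_nf
      rw [Complex.I_sq]
      ring
    have hMain : fderiv ℝ Sg p v =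
        (∑ j, (starRingEnd ℂ) (p.2 j) * Wz (fun q => Wzbar f q (ez m j)) p v)
        + ∑ j, p.2 j * Wzbar (fun q => Wz f q (ez m j)) p v := by
      rw [fderiv_eq_wz_add Sg p v]
      have hWzEq : Wz Sg p v = Wz Sh p v := by rw [Wz, Wz, hfdSgSh]
      rw [hWzEq, hWzSh, hWzbarSg]
    -- the ξ vector as a sum
    have hxi : xiS1 p = ∑ j, (Complex.I * p.2 j) • ez m j := by
      apply Prod.ext
      · rw [Prod.fst_sum]
        simp [xiS1, ez]
      · rw [Prod.snd_sum]
        funext k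
        rw [Finset.sum_apply]
        simp [xiS1, ez, Pi.single_apply, mul_ite, Finset.sum_ite_eq]
    have hH1 : cHess f p (xiS1 p) v =
        ∑ j, (Complex.I * p.2 j) * Wz (fun q => Wzbar f q v) p (ez m j) := by
      rw [cHess, hxi, wz_sum]
      exact Finset.sum_congr rfl fun j _ => wz_smul _ _ _ _
    have hH2fun : (fun q => Wzbar f q (xiS1 p)) =
        fun q => ∑ j, (starRingEnd ℂ) (Complex.I * p.2 j) * Wzbar f q (ez m j) := by
      funext q
      rw [hxi, wzbar_sum]
      exact Finset.sum_congr rfl fun j _ => wzbar_smul _ _ _ _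
    have hH2 : cHess f p v (xiS1 p) =
        ∑ j, (starRingEnd ℂ) (Complex.I * p.2 j)
          * Wz (fun q => Wzbar f q (ez m j)) p v := by
      rw [cHess, hH2fun]
      exact wz_fun_sum _ _ p v hBd
    have hcomm : ∀ j : Fin n, Wzbar (fun q => Wz f q (ez m j)) p v =
        Wz (fun q => Wzbar f q v) p (ez m j) :=
      fun j => wz_wzbar_comm f p hfp (ez m j) v
    -- assemble
    have hgoal : (fun q : P m n => -(1/2 : ℂ) * ∑ j, q.2 j * Wz f q (ez m j)) =
        fun q => -(1/2 : ℂ) * Sg q := rfl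
    rw [hgoal, fderiv_const_mul hSgd]
    simp only [ContinuousLinearMap.smul_apply, smul_eq_mul]
    rw [hMain, Om, hH1, hH2]
    have hsumcomm : (∑ j, p.2 j * Wzbar (fun q => Wz f q (ez m j)) p v) =
        ∑ j, p.2 j * Wz (fun q => Wzbar f q v) p (ez m j) :=
      Finset.sum_congr rfl fun j _ => by rw [hcomm j]
    rw [hsumcomm]
    have hT1 : (∑ j, (Complex.I * p.2 j) * Wz (fun q => Wzbar f q v) p (ez m j)) =
        Complex.I * ∑ j, p.2 j * Wz (fun q => Wzbar f q v) p (ez m j) := by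
      rw [Finset.mul_sum]
      exact Finset.sum_congr rfl fun j _ => by ring
    have hT2 : (∑ j, (starRingEnd ℂ) (Complex.I * p.2 j)
          * Wz (fun q => Wzbar f q (ez m j)) p v) =
        (-Complex.I) * ∑ j, (starRingEnd ℂ) (p.2 j)
          * Wz (fun q => Wzbar f q (ez m j)) p v := by
      rw [Finset.mul_sum]
      refine Finset.sum_congr rfl fun j _ => ?_
      rw [map_mul, Complex.conj_I]
      ring
    rw [hT1, hT2]
    ring_nf
    rw [Complex.I_sq]
    ring
end
end

section
/- For the unit ball D = {Σ|w_j|² + Σ|z_j|² < 1} ⊂ ℂ^{m+n} with the S¹-action rotating the z-coordinates, the function μ = −((n+1)/2) · (1 − Σ_{j=1}^m |w_j|²) / (1 − Σ_j |w_j|² − Σ_j |z_j|²) satisfies dμ = ι_ξ Ω, where Ω = (√-1/2) ∂∂̄ log K and K(w,z) = (n!/πⁿ) (1 − Σ|w_j|²)/(1 − Σ|w_j|² − Σ|z_j|²)^{n+1} is the Bergman kernel of the slice; moreover the moment maps μ_D, μ_{Dᵐ} of the Bergman metrics of D and the ball Dᵐ satisfy the multiplicative relation μ_D = −(2(m+n+1)/((m+1)(n+1)))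 μ_{Dᵐ} · μ. -/
set_option synthInstance.maxHeartbeats 1000000
set_option maxHeartbeats 1000000
set_option maxSynthPendingDepth 3

open Module LinearMap

noncomputable section

variable {m n : ℕ}

/-!
For complex linear functionals `c_k` put `ρ = 1 - Σ |c_k|²` and `H(q, v) = Σ conj (c_k q) c_k v`.
Since `H(q, ·)` is complex linear, the Wirtinger calculus gives `∂̄_v log ρ = -H(v, q) / ρ` and
`∂_u ∂̄_v log ρ = -H(v, u) / ρ - H(v, p) H(p, u) / ρ²`. Near a point of the ball,
`log K = log (n!/πⁿ) + log ρ_w - (n + 1) log ρ`, where `ρ_w` uses only the `w`-coordinates and `ρ`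
all of them. Contracting with `ξ = (0, i z)` kills every `w`-term, because `H_w(ξ, ·) = 0`, and
leaves `-(n + 1) Re (H_z(p, v) / ρ + H_z(p, p) H(p, v) / ρ²)`; since `H_z(p, p) = ρ_w - ρ`, this
is the derivative of `-((n + 1) / 2) ρ_w / ρ` in the direction `v`. The multiplicative
relation between the moment maps is an identity of rational functions.
-/

open Complex ComplexConjugate

section HermitianForm

variable {E : Type*} [NormedAddCommGroup E] [NormedSpace ℂ E] {ι κ : Type*} [Fintype ι] [Fintype κ]
  (c : ι → E →L[ℂ] ℂ) (d : κ → E →L[ℂ] ℂ)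

def herm (q : E) : E →L[ℂ] ℂ := ∑ k, conj (c k q) • c k

def ballDefiningFn (q : E) : ℝ := 1 - ∑ k, normSq (c k q)

lemma herm_apply (q v : E) : herm c q v = ∑ k, conj (c k q) * c k v := by
  simp [herm]

lemma conj_herm (q v : E) : conj (herm c q v) = herm c v q := by
  simp only [herm_apply, map_sum, map_mul, conj_conj, mul_comm]

lemma herm_self (q : E) : herm c q q = ((1 - ballDefiningFn c q : ℝ) : ℂ) := by
  simp [herm_apply, ballDefiningFn, mul_comm, mul_conj]

lemma hasFDerivAt_ballDefiningFn (q : E) :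
    HasFDerivAt (ballDefiningFn c)
      (-(2 : ℝ) • reCLM.comp ((herm c q).restrictScalars ℝ)) q := by
  have hsum := HasFDerivAt.fun_sum (u := Finset.univ)
    fun k _ => ((c k).restrictScalars ℝ).hasFDerivAt.norm_sq (x := q)
  refine ((hasFDerivAt_const (1 : ℝ) q).sub hsum).congr_fderiv ?_ |>.congr_of_eventuallyEq ?_
  · ext v
    simp [herm_apply, Complex.inner, Finset.mul_sum, mul_comm, mul_add]
  · filter_upwards with x
    simp [ballDefiningFn, normSq_eq_norm_sq]

lemma continuous_ballDefiningFn : Continuous (ballDefiningFn c) :=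
  continuous_iff_continuousAt.mpr fun q => (hasFDerivAt_ballDefiningFn c q).continuousAt

lemma eventually_pos_ballDefiningFn {p : E} (hp : 0 < ballDefiningFn c p) :
    ∀ᶠ q in nhds p, 0 < ballDefiningFn c q :=
  ((continuous_ballDefiningFn c).tendsto p).eventually (lt_mem_nhds hp)

lemma fderiv_ballDefiningFn_div (a : ℝ) {p : E} (hp : ballDefiningFn d p ≠ 0) (v : E) :
    fderiv ℝ (fun q => ((a * ballDefiningFn c q / ballDefiningFn d q : ℝ) : ℂ)) p v =
      a * (ballDefiningFn c p * (herm d p v + conj (herm d p v)) -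
        ballDefiningFn d p * (herm c p v + conj (herm c p v))) / ballDefiningFn d p ^ 2 := by
  have hinv := (hasDerivAt_inv hp).comp_hasFDerivAt p (hasFDerivAt_ballDefiningFn d p)
  have h : HasFDerivAt (fun q => ((a * ballDefiningFn c q * (ballDefiningFn d q)⁻¹ : ℝ) : ℂ)) _ p :=
    ofRealCLM.hasFDerivAt.comp p (((hasFDerivAt_ballDefiningFn c p).const_mul a).mul hinv)
  simp only [div_eq_mul_inv]
  rw [h.fderiv]
  have hpC : (ballDefiningFn d p : ℂ) ≠ 0 := ofReal_ne_zero.mpr hp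
  simp only [neg_smul, smul_neg, neg_neg, ContinuousLinearMap.comp_add,
    ContinuousLinearMap.comp_smulₛₗ, Real.ringHom_apply, map_inv₀, ContinuousLinearMap.comp_neg,
    _root_.add_apply, _root_.smul_apply, ContinuousLinearMap.comp_apply,
    ContinuousLinearMap.coe_restrictScalars', reCLM_apply, ofRealCLM_apply, real_smul,
    ofReal_ofNat, ofReal_inv, ofReal_pow, ofReal_mul, _root_.neg_apply, add_conj]
  field_simp
  ring

end HermitianForm

section Wirtinger

variable {f g : P m n → ℂ} {p : P m n}

lemma Filter.EventuallyEq.Wz_eq (h : f =ᶠ[nhds p] g) (u : P m n) : Wz f p u = Wz g p u := by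
  rw [Wz, Wz, h.fderiv_eq]

lemma Filter.EventuallyEq.Wzbar_eq (h : f =ᶠ[nhds p] g) (v : P m n) :
    Wzbar f p v = Wzbar g p v := by
  rw [Wzbar, Wzbar, h.fderiv_eq]

lemma Wz_sub (hf : DifferentiableAt ℝ f p) (hg : DifferentiableAt ℝ g p) (u : P m n) :
    Wz (fun q => f q - g q) p u = Wz f p u - Wz g p u := by
  simp only [Wz, fderiv_fun_sub hf hg, _root_.sub_apply]
  ring

lemma Wz_const_mul (a : ℂ) (hf : DifferentiableAt ℝ f p) (u : P m n) :
    Wz (fun q => a * f q) p u = a * Wz f p u := by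
  simp only [Wz, fderiv_const_mul hf, _root_.smul_apply, smul_eq_mul]
  ring

lemma Wz_mul (hf : DifferentiableAt ℝ f p) (hg : DifferentiableAt ℝ g p) (u : P m n) :
    Wz (fun q => f q * g q) p u = f p * Wz g p u + g p * Wz f p u := by
  simp only [Wz, fderiv_fun_mul hf hg, _root_.add_apply, _root_.smul_apply, smul_eq_mul]
  ring

lemma Wz_clm (L : P m n →L[ℂ] ℂ) (u : P m n) : Wz (fun q => L q) p u = L u := by
  have hL : HasFDerivAt (fun q => L q) (L.restrictScalars ℝ) p := (L.restrictScalars ℝ).hasFDerivAt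
  rw [Wz, hL.fderiv, ContinuousLinearMap.coe_restrictScalars', L.map_smul, smul_eq_mul]
  linear_combination (-L u / 2) * I_sq

lemma Wzbar_const_add (a : ℂ) (v : P m n) :
    Wzbar (fun q => a + f q) p v = Wzbar f p v := by
  simp only [Wzbar, fderiv_const_add]

lemma Wzbar_sub (hf : DifferentiableAt ℝ f p) (hg : DifferentiableAt ℝ g p) (v : P m n) :
    Wzbar (fun q => f q - g q) p v = Wzbar f p v - Wzbar g p v := by
  simp only [Wzbar, fderiv_fun_sub hf hg, _root_.sub_apply]
  ring

lemma Wzbar_const_mul (a : ℂ) (hf : DifferentiableAt ℝ f p) (v : P m n) :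
    Wzbar (fun q => a * f q) p v = a * Wzbar f p v := by
  simp only [Wzbar, fderiv_const_mul hf, _root_.smul_apply, smul_eq_mul]
  ring

variable {φ : P m n → ℝ} {φ' : P m n →L[ℝ] ℝ}

lemma Wz_ofReal (hφ : HasFDerivAt φ φ' p) (u : P m n) :
    Wz (fun q => (φ q : ℂ)) p u = (φ' u - I * φ' (I • u)) / 2 := by
  have hφC : HasFDerivAt (fun q => (φ q : ℂ)) (ofRealCLM.comp φ') p :=
    ofRealCLM.hasFDerivAt.comp p hφ
  rw [Wz, hφC.fderiv]
  simp only [ContinuousLinearMap.comp_apply, ofRealCLM_apply]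
  ring

lemma Wzbar_ofReal (hφ : HasFDerivAt φ φ' p) (v : P m n) :
    Wzbar (fun q => (φ q : ℂ)) p v = (φ' v + I * φ' (I • v)) / 2 := by
  have hφC : HasFDerivAt (fun q => (φ q : ℂ)) (ofRealCLM.comp φ') p :=
    ofRealCLM.hasFDerivAt.comp p hφ
  rw [Wzbar, hφC.fderiv]
  simp only [ContinuousLinearMap.comp_apply, ofRealCLM_apply]
  ring

lemma Wz_ofReal_comp {F : ℝ → ℝ} {F' : ℝ} (hF : HasDerivAt F F' (φ p))
    (hφ : HasFDerivAt φ φ' p) (u : P m n) :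
    Wz (fun q => (F (φ q) : ℂ)) p u = F' * Wz (fun q => (φ q : ℂ)) p u := by
  rw [Wz_ofReal (φ := fun q => F (φ q)) (hF.comp_hasFDerivAt p hφ), Wz_ofReal hφ]
  simp only [_root_.smul_apply, smul_eq_mul, ofReal_mul]
  ring

lemma Wzbar_ofReal_comp {F : ℝ → ℝ} {F' : ℝ} (hF : HasDerivAt F F' (φ p))
    (hφ : HasFDerivAt φ φ' p) (v : P m n) :
    Wzbar (fun q => (F (φ q) : ℂ)) p v = F' * Wzbar (fun q => (φ q : ℂ)) p v := by
  rw [Wzbar_ofReal (φ := fun q => F (φ q)) (hF.comp_hasFDerivAt p hφ), Wzbar_ofReal hφ]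
  simp only [_root_.smul_apply, smul_eq_mul, ofReal_mul]
  ring

end Wirtinger

section BallDefiningFn

variable {ι : Type*} [Fintype ι] (c : ι → P m n →L[ℂ] ℂ) {p : P m n}

lemma Wz_ballDefiningFn (u : P m n) :
    Wz (fun q => (ballDefiningFn c q : ℂ)) p u = -herm c p u := by
  rw [Wz_ofReal (hasFDerivAt_ballDefiningFn c p)]
  simp only [_root_.smul_apply, ContinuousLinearMap.comp_apply,
    ContinuousLinearMap.coe_restrictScalars', map_smul, smul_eq_mul, reCLM_apply]
  apply Complex.ext <;> simp [neg_div]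

lemma Wzbar_ballDefiningFn (v : P m n) :
    Wzbar (fun q => (ballDefiningFn c q : ℂ)) p v = -herm c v p := by
  rw [Wzbar_ofReal (hasFDerivAt_ballDefiningFn c p), ← conj_herm]
  simp only [_root_.smul_apply, ContinuousLinearMap.comp_apply,
    ContinuousLinearMap.coe_restrictScalars', map_smul, smul_eq_mul, reCLM_apply]
  apply Complex.ext <;> simp [neg_div]

lemma differentiableAt_log_ballDefiningFn (hp : 0 < ballDefiningFn c p) :
    DifferentiableAt ℝ (fun q => (Real.log (ballDefiningFn c q) : ℂ)) p :=
  ofRealCLM.differentiableAt.comp p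
    ((hasFDerivAt_ballDefiningFn c p).differentiableAt.log hp.ne')

lemma Wzbar_log_ballDefiningFn (hp : 0 < ballDefiningFn c p) (v : P m n) :
    Wzbar (fun q => (Real.log (ballDefiningFn c q) : ℂ)) p v =
      -(herm c v p * ((ballDefiningFn c p)⁻¹ : ℝ)) := by
  rw [Wzbar_ofReal_comp (Real.hasDerivAt_log hp.ne') (hasFDerivAt_ballDefiningFn c p),
    Wzbar_ballDefiningFn]
  ring

lemma differentiableAt_herm_mul_inv_ballDefiningFn (hp : ballDefiningFn c p ≠ 0) (v : P m n) :
    DifferentiableAt ℝ (fun q => herm c v q * ((ballDefiningFn c q)⁻¹ : ℝ)) p :=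
  ((herm c v).restrictScalars ℝ).differentiableAt.mul
    (ofRealCLM.differentiableAt.comp p
      ((hasFDerivAt_ballDefiningFn c p).differentiableAt.inv hp))

lemma Wz_herm_mul_inv_ballDefiningFn (hp : ballDefiningFn c p ≠ 0) (u v : P m n) :
    Wz (fun q => herm c v q * ((ballDefiningFn c q)⁻¹ : ℝ)) p u =
      herm c v u * ((ballDefiningFn c p)⁻¹ : ℝ) +
        herm c v p * herm c p u * ((ballDefiningFn c p)⁻¹ : ℝ) ^ 2 := by
  have hherm : DifferentiableAt ℝ (fun q => herm c v q) p :=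
    ((herm c v).restrictScalars ℝ).differentiableAt
  have hinv : DifferentiableAt ℝ (fun q => (((ballDefiningFn c q)⁻¹ : ℝ) : ℂ)) p :=
    ofRealCLM.differentiableAt.comp p ((hasFDerivAt_ballDefiningFn c p).differentiableAt.inv hp)
  rw [Wz_mul hherm hinv, Wz_clm,
    Wz_ofReal_comp (hasDerivAt_inv hp) (hasFDerivAt_ballDefiningFn c p), Wz_ballDefiningFn]
  push_cast
  ring

end BallDefiningFn

section Slice

def wCoord (i : Fin m) : P m n →L[ℂ] ℂ :=
  (ContinuousLinearMap.proj i).comp (ContinuousLinearMap.fst ℂ (Fin m → ℂ) (Fin n → ℂ))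

def zCoord (j : Fin n) : P m n →L[ℂ] ℂ :=
  (ContinuousLinearMap.proj j).comp (ContinuousLinearMap.snd ℂ (Fin m → ℂ) (Fin n → ℂ))

def coord : Fin m ⊕ Fin n → P m n →L[ℂ] ℂ := Sum.elim wCoord zCoord

lemma ballDefiningFn_wCoord (q : P m n) :
    ballDefiningFn wCoord q = 1 - ∑ i, normSq (q.1 i) := rfl

lemma ballDefiningFn_coord (q : P m n) :
    ballDefiningFn coord q = ballDefiningFn wCoord q - ∑ j, normSq (q.2 j) := by
  simp only [ballDefiningFn, coord, Fintype.sum_sum_type, Sum.elim_inl, Sum.elim_inr]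
  exact sub_add_eq_sub_sub _ _ _

lemma ballDefiningFn_coord_le (q : P m n) : ballDefiningFn coord q ≤ ballDefiningFn wCoord q := by
  rw [ballDefiningFn_coord]
  exact sub_le_self _ (Finset.sum_nonneg fun j _ => normSq_nonneg _)

lemma herm_coord (q v : P m n) : herm coord q v = herm wCoord q v + herm zCoord q v := by
  simp only [herm_apply, coord, Fintype.sum_sum_type, Sum.elim_inl, Sum.elim_inr]

lemma herm_zCoord_self (p : P m n) :
    herm zCoord p p = ((ballDefiningFn wCoord p - ballDefiningFn coord p : ℝ) : ℂ) := by
  rw [herm_self, ballDefiningFn_coord]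
  simp [ballDefiningFn, zCoord]

lemma herm_wCoord_xiS1 (p q : P m n) : herm wCoord q (xiS1 p) = 0 := by
  simp [herm_apply, wCoord, xiS1]

lemma herm_xiS1_wCoord (p q : P m n) : herm wCoord (xiS1 p) q = 0 := by
  rw [← conj_herm, herm_wCoord_xiS1, map_zero]

lemma herm_zCoord_xiS1 (p q : P m n) : herm zCoord q (xiS1 p) = I * herm zCoord q p := by
  simp only [herm_apply, zCoord, xiS1, Finset.mul_sum, ContinuousLinearMap.comp_apply,
    ContinuousLinearMap.coe_snd', ContinuousLinearMap.proj_apply]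
  exact Finset.sum_congr rfl fun j _ => by ring

lemma herm_xiS1_zCoord (p q : P m n) : herm zCoord (xiS1 p) q = -I * herm zCoord p q := by
  rw [← conj_herm, herm_zCoord_xiS1, map_mul, conj_I, conj_herm]

end Slice

-- With `C = n!/πⁿ` and `k = n + 1` these are the Bergman kernel `K` of the slice and `μ`.
def sliceKernel (C : ℝ) (k : ℕ) (q : P m n) : ℝ :=
  C * ballDefiningFn wCoord q / ballDefiningFn coord q ^ k

def sliceMomentMap (k : ℕ) (q : P m n) : ℝ :=
  -((k : ℝ) / 2) * ballDefiningFn wCoord q / ballDefiningFn coord q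

section SliceKernel

variable {C : ℝ} (k : ℕ) {p : P m n}

lemma Wzbar_log_sliceKernel (hC : 0 < C) (hp : 0 < ballDefiningFn coord p) (v : P m n) :
    Wzbar (fun q => (Real.log (sliceKernel C k q) : ℂ)) p v =
      k * (herm coord v p * ((ballDefiningFn coord p)⁻¹ : ℝ)) -
        herm wCoord v p * ((ballDefiningFn wCoord p)⁻¹ : ℝ) := by
  have hw : 0 < ballDefiningFn wCoord p := hp.trans_le (ballDefiningFn_coord_le p)
  have hev : (fun q => (Real.log (sliceKernel C k q) : ℂ)) =ᶠ[nhds p] fun q =>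
      (Real.log C : ℂ) + ((Real.log (ballDefiningFn wCoord q) : ℂ) -
        k * (Real.log (ballDefiningFn coord q) : ℂ)) := by
    filter_upwards [eventually_pos_ballDefiningFn coord hp] with q hq
    have hwq : 0 < ballDefiningFn wCoord q := hq.trans_le (ballDefiningFn_coord_le q)
    rw [sliceKernel, Real.log_div (by positivity) (by positivity), Real.log_mul hC.ne' hwq.ne',
      Real.log_pow]
    push_cast
    ring
  rw [hev.Wzbar_eq, Wzbar_const_add,
    Wzbar_sub (differentiableAt_log_ballDefiningFn _ hw)
      ((differentiableAt_log_ballDefiningFn _ hp).const_mul _),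
    Wzbar_const_mul _ (differentiableAt_log_ballDefiningFn _ hp),
    Wzbar_log_ballDefiningFn _ hw, Wzbar_log_ballDefiningFn _ hp]
  ring

lemma cHess_log_sliceKernel (hC : 0 < C) (hp : 0 < ballDefiningFn coord p) (u v : P m n) :
    cHess (fun q => (Real.log (sliceKernel C k q) : ℂ)) p u v =
      k * (herm coord v u * ((ballDefiningFn coord p)⁻¹ : ℝ) +
          herm coord v p * herm coord p u * ((ballDefiningFn coord p)⁻¹ : ℝ) ^ 2) -
        (herm wCoord v u * ((ballDefiningFn wCoord p)⁻¹ : ℝ) +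
          herm wCoord v p * herm wCoord p u * ((ballDefiningFn wCoord p)⁻¹ : ℝ) ^ 2) := by
  have hw : 0 < ballDefiningFn wCoord p := hp.trans_le (ballDefiningFn_coord_le p)
  have hev : (fun q => Wzbar (fun q => (Real.log (sliceKernel C k q) : ℂ)) q v) =ᶠ[nhds p]
      fun q => k * (herm coord v q * ((ballDefiningFn coord q)⁻¹ : ℝ)) -
        herm wCoord v q * ((ballDefiningFn wCoord q)⁻¹ : ℝ) := by
    filter_upwards [eventually_pos_ballDefiningFn coord hp] with q hq
    exact Wzbar_log_sliceKernel k hC hq v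
  rw [cHess, hev.Wz_eq,
    Wz_sub ((differentiableAt_herm_mul_inv_ballDefiningFn _ hp.ne' v).const_mul _)
      (differentiableAt_herm_mul_inv_ballDefiningFn _ hw.ne' v),
    Wz_const_mul _ (differentiableAt_herm_mul_inv_ballDefiningFn _ hp.ne' v),
    Wz_herm_mul_inv_ballDefiningFn _ hp.ne', Wz_herm_mul_inv_ballDefiningFn _ hw.ne']

theorem fderiv_sliceMomentMap_eq_Om (hC : 0 < C) (hp : 0 < ballDefiningFn coord p) (v : P m n) :
    fderiv ℝ (fun q => (sliceMomentMap k q : ℂ)) p v =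
      Om (fun q => (Real.log (sliceKernel C k q) : ℂ)) p (xiS1 p) v := by
  unfold sliceMomentMap
  rw [Om, cHess_log_sliceKernel k hC hp, cHess_log_sliceKernel k hC hp,
    fderiv_ballDefiningFn_div _ _ _ hp.ne']
  simp only [herm_coord, herm_wCoord_xiS1, herm_xiS1_wCoord, herm_zCoord_xiS1, herm_xiS1_zCoord,
    herm_zCoord_self, map_add]
  rw [← conj_herm wCoord p v, ← conj_herm zCoord p v]
  have hpC : (ballDefiningFn coord p : ℂ) ≠ 0 := ofReal_ne_zero.mpr hp.ne'
  push_cast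
  field_simp
  ring_nf
  simp only [I_sq]
  ring

end SliceKernel

/-- for the unit ball `D = {Σ|w|² + Σ|z|² < 1} ⊂ ℂ^{m+n}` with the
`S¹`-action rotating the `z`-coordinates, the function
`μ = −((n+1)/2)(1 − Σ|w|²)/(1 − Σ|w|² − Σ|z|²)` satisfies `dμ = ι_ξ Ω` for
`Ω = (√-1/2)∂∂̄ log K`, where `K` is the Bergman kernel of the slice; moreover the moment
maps `μ_D`, `μ_{Dᵐ}` of the Bergman metrics of `D` and `Dᵐ` satisfy
`μ_D = −(2(m+n+1)/((m+1)(n+1))) μ_{Dᵐ} · μ`. -/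
theorem ball_bergman_moment_map_and_multiplicative_relation (m n : ℕ) :
    (∀ p : P m n, (∑ i, Complex.normSq (p.1 i)) + ∑ j, Complex.normSq (p.2 j) < 1 →
      ∀ v : P m n,
        fderiv ℝ
            (fun q : P m n =>
              ((-( (n + 1 : ℝ) / 2) *
                  (1 - ∑ i, Complex.normSq (q.1 i)) /
                  (1 - ∑ i, Complex.normSq (q.1 i) - ∑ j, Complex.normSq (q.2 j)) : ℝ) : ℂ))
            p v =
          Om
            (fun q : P m n =>
              ((Real.log ((n.factorial : ℝ) / Real.pi ^ n *
                  (1 - ∑ i, Complex.normSq (q.1 i)) /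
                  (1 - ∑ i, Complex.normSq (q.1 i) - ∑ j, Complex.normSq (q.2 j)) ^ (n + 1))
                : ℝ) : ℂ))
            p (xiS1 p) v) ∧
    (∀ p : P m n, (∑ i, Complex.normSq (p.1 i)) + ∑ j, Complex.normSq (p.2 j) < 1 →
      (-( (m + n + 1 : ℝ) / 2) /
          (1 - ∑ i, Complex.normSq (p.1 i) - ∑ j, Complex.normSq (p.2 j)) : ℝ) =
        -(2 * (m + n + 1 : ℝ) / ((m + 1) * (n + 1))) *
          (-( (m + 1 : ℝ) / 2) / (1 - ∑ i, Complex.normSq (p.1 i))) *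
          (-( (n + 1 : ℝ) / 2) *
            (1 - ∑ i, Complex.normSq (p.1 i)) /
            (1 - ∑ i, Complex.normSq (p.1 i) - ∑ j, Complex.normSq (p.2 j)))) := by
  have hz (p : P m n) : 0 ≤ ∑ j, normSq (p.2 j) := Finset.sum_nonneg fun j _ => normSq_nonneg _
  refine ⟨fun p hp v => ?_, fun p hp => ?_⟩
  · have hρ : 0 < ballDefiningFn coord p := by
      rw [ballDefiningFn_coord, ballDefiningFn_wCoord]
      linarith
    simpa only [sliceMomentMap, sliceKernel, ballDefiningFn_coord, ballDefiningFn_wCoord,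
      Nat.cast_add_one] using
      fderiv_sliceMomentMap_eq_Om (n + 1) (C := n.factorial / Real.pi ^ n) (by positivity) hρ v
  · have hw : 0 < 1 - ∑ i, normSq (p.1 i) := by linarith [hz p]
    field_simp
end
end
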